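/- arXiv:2307.11029 — 3 statements merged into one kernel-verified Lean document; each statement's English description precedes it below -/
import Mathlib

section
/- For any non-crossing partition π of a finite cyclically ordered set S, the number of blocks of π plus the number of blocks of its Kreweras complement K(π) equals |S| + 1. -/
open Finset

/-- Two elements lie in the same block of a finpartition. -/
def SameBlock {α : Type*} [DecidableEq α] {s : Finset α} (π : Finpartition s) (a b : α) : Prop :=
  ∃ B ∈ π.parts, a ∈ B ∧ b ∈ B

/-- A finpartition of (a subset of) the linearly ordered set `Fin n` is non-crossing if there
are no blocks `B ≠ B'` with `a, b ∈ B`, `c, d ∈ B'` and `a < c < b < d`. -/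
def IsNoncrossing {n : ℕ} {s : Finset (Fin n)} (π : Finpartition s) : Prop :=
  ∀ a b c d : Fin n, a < c → c < b → b < d →
    SameBlock π a b → SameBlock π c d → SameBlock π a c

/-- The point of the disk corresponding to element `i` (interleaved picture: points at even
positions, arcs at odd positions). -/
def diskPt {n : ℕ} (i : Fin n) : Fin (2 * n) :=
  ⟨2 * i.1, by have := i.isLt; omega⟩

/-- The midpoint of the arc following the point `i`. -/
def diskArc {n : ℕ} (i : Fin n) : Fin (2 * n) :=
  ⟨2 * i.1 + 1, by have := i.isLt; omega⟩

/-- The combined relation on the interleaved circle: `x, y` are related if they are both points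
lying in a common block of `π`, or both arcs lying in a common block of `ρ`. -/
def CombRel {n : ℕ} (π ρ : Finpartition (univ : Finset (Fin n))) (x y : Fin (2 * n)) : Prop :=
  (∃ a b : Fin n, x = diskPt a ∧ y = diskPt b ∧ SameBlock π a b) ∨
  (∃ a b : Fin n, x = diskArc a ∧ y = diskArc b ∧ SameBlock ρ a b)

/-- `ρ` (on the arcs) is compatible with `π` (on the points): the combined configuration on the
interleaved circle is non-crossing, i.e. `ρ` can be drawn in the complement of the convex hulls
of the blocks of `π`. -/
def Compat {n : ℕ} (π ρ : Finpartition (univ : Finset (Fin n))) : Prop :=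
  ∀ x y u v : Fin (2 * n), x < u → u < y → y < v →
    CombRel π ρ x y → CombRel π ρ u v → CombRel π ρ x u

/-- `ρ` is the Kreweras complement of `π`: it is the maximal partition of the arc labels that
does not cross `π`. -/
def IsKreweras {n : ℕ} (π ρ : Finpartition (univ : Finset (Fin n))) : Prop :=
  Compat π ρ ∧ ∀ ρ' : Finpartition (univ : Finset (Fin n)), Compat π ρ' → ρ' ≤ ρ

/-!
Colour each point by its block of `π`. The blocks of `ρ` are then exactly the classes of arcs
not separated by any chord of `π`: a block of `ρ` with arcs on both sides of a chord would
cross it, and the partition into these classes is itself compatible, hence refines `ρ`.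

The count `#colours + #arc classes = n + 1` is proved by induction on `n`. A non-crossing
colouring of at least two points has a point `t ≠ 0` alone in its colour, or two neighbours of the
same colour. Deleting such a `t` loses one colour and no arc class, since the two arcs at `t`
merge; merging two such neighbours loses no colour and one arc class, the arc between them.
-/

variable {α β : Type*}

section Coloring

variable [Preorder α]

def IsNoncrossingColoring (f : α → β) : Prop :=
  ∀ a b c d, a < c → c < b → b < d → f a = f b → f c = f d → f a = f c

lemma IsNoncrossingColoring.comp_strictMono {γ : Type*} [Preorder γ] {f : α → β}
    (hf : IsNoncrossingColoring f) {g : γ → α} (hg : StrictMono g) :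
    IsNoncrossingColoring (f ∘ g) :=
  fun _ _ _ _ hac hcb hbd => hf _ _ _ _ (hg hac) (hg hcb) (hg hbd)

/-- Arc `i` is the arc leaving point `i`; a chord joining two points `a < b` of the same colour
cuts off exactly the arcs `a ≤ i < b`. Two arcs lie in the same region of the disk cut along
the blocks iff no chord separates them. -/
def Unseparated (f : α → β) (i j : α) : Prop :=
  ∀ a b, f a = f b → (a ≤ i ∧ i < b ↔ a ≤ j ∧ j < b)

lemma unseparated_equivalence (f : α → β) : Equivalence (Unseparated f) where
  refl _ _ _ _ := Iff.rfl
  symm h a b hab := (h a b hab).symm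
  trans h₁ h₂ a b hab := (h₁ a b hab).trans (h₂ a b hab)

end Coloring

section ClassCount

variable {n : ℕ}

open scoped Classical in
/-- Counts each class of an equivalence relation `r` by its least element. -/
noncomputable def classCount (r : Fin n → Fin n → Prop) : ℕ := #{j | ∀ i < j, ¬ r i j}

lemma classCount_congr {r r' : Fin n → Fin n → Prop} (h : ∀ i j, r i j ↔ r' i j) :
    classCount r = classCount r' :=
  congrArg classCount (funext₂ fun i j => propext (h i j))

lemma classCount_fin_one (r : Fin 1 → Fin 1 → Prop) : classCount r = 1 := by
  classical
  rw [classCount, filter_true_of_mem fun j _ i hi => absurd hi (by omega)]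
  rfl

variable {r : Fin (n + 1) → Fin (n + 1) → Prop} {s : Fin (n + 1)}

lemma forall_lt_not_succAbove_iff (hs : ∀ x ≠ s, r s x → ∃ i < s, r i x) (k : Fin n) :
    (∀ i < s.succAbove k, ¬ r i (s.succAbove k)) ↔
      ∀ i < k, ¬ r (s.succAbove i) (s.succAbove k) := by
  refine ⟨fun h i hi => h _ (Fin.strictMono_succAbove s hi), fun h i hi hr => ?_⟩
  obtain ⟨i, hi, hr, his⟩ : ∃ i < s.succAbove k, r i (s.succAbove k) ∧ i ≠ s := by
    by_cases his : i = s
    · subst his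
      obtain ⟨i', hi', hr'⟩ := hs _ (Fin.succAbove_ne _ _) hr
      exact ⟨i', hi'.trans hi, hr', hi'.ne⟩
    · exact ⟨i, hi, hr, his⟩
  obtain ⟨c, rfl⟩ := Fin.exists_succAbove_eq his
  exact h c (Fin.succAbove_lt_succAbove_iff.mp hi) hr

open scoped Classical in
lemma classCount_eq_classCount_succAbove_add (hs : ∀ x ≠ s, r s x → ∃ i < s, r i x) :
    classCount r = classCount (fun k l => r (s.succAbove k) (s.succAbove l)) +
      if ∀ i < s, ¬ r i s then 1 else 0 := by
  have hmap : #{k ∈ univ.map s.succAboveEmb | ∀ i < k, ¬ r i k} =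
      #{k | ∀ i < k, ¬ r (s.succAbove i) (s.succAbove k)} := by
    rw [filter_map, card_map]
    exact congrArg card (filter_congr fun k _ => forall_lt_not_succAbove_iff hs k)
  rw [classCount, classCount, Fin.univ_succAbove n s, filter_cons]
  split_ifs <;> simp only [card_cons, hmap, add_zero]

lemma classCount_succAbove_of_rel (hr : Equivalence r) {s' : Fin (n + 1)} (hs' : s' < s)
    (hrs : r s' s) : classCount r = classCount (fun k l => r (s.succAbove k) (s.succAbove l)) := by
  rw [classCount_eq_classCount_succAbove_add fun x _ hx => ⟨s', hs', hr.trans hrs hx⟩,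
    if_neg fun h => h s' hs' hrs, add_zero]

lemma classCount_succAbove_of_isolated (hr : Equivalence r) (hs : ∀ x ≠ s, ¬ r x s) :
    classCount r = classCount (fun k l => r (s.succAbove k) (s.succAbove l)) + 1 := by
  rw [classCount_eq_classCount_succAbove_add fun x hx h => absurd (hr.symm h) (hs x hx),
    if_pos fun i hi => hs i hi.ne]

end ClassCount

section Deletion

variable {n : ℕ}

lemma eq_of_apply_eq_of_isolated {f : α → β} {t a b : α} (ht : ∀ x ≠ t, f x ≠ f t)
    (hab : f a = f b) (h : a = t ∨ b = t) : a = b := by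
  by_contra hne
  rcases h with rfl | rfl
  exacts [ht b (Ne.symm hne) hab.symm, ht a hne hab]

lemma unseparated_succAbove_iff_of_isolated {f : Fin (n + 1) → β} {t : Fin (n + 1)}
    (ht : ∀ b ≠ t, f b ≠ f t) {k l : Fin n} :
    Unseparated (f ∘ t.succAbove) k l ↔ Unseparated f (t.succAbove k) (t.succAbove l) := by
  refine ⟨fun h a b hab => ?_, fun h a b hab => ?_⟩
  · by_cases hab' : a = t ∨ b = t
    · obtain rfl := eq_of_apply_eq_of_isolated ht hab hab'
      exact iff_of_false (fun h => (h.1.trans_lt h.2).false) (fun h => (h.1.trans_lt h.2).false)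
    · rw [not_or] at hab'
      obtain ⟨a, rfl⟩ := Fin.exists_succAbove_eq hab'.1
      obtain ⟨b, rfl⟩ := Fin.exists_succAbove_eq hab'.2
      simpa only [Fin.succAbove_le_succAbove_iff, Fin.succAbove_lt_succAbove_iff] using h a b hab
  · simpa only [Fin.succAbove_le_succAbove_iff, Fin.succAbove_lt_succAbove_iff] using
      h (t.succAbove a) (t.succAbove b) hab

lemma unseparated_castSucc_succ_of_isolated {f : Fin (n + 2) → β} {u : Fin (n + 1)}
    (hu : ∀ b ≠ u.succ, f b ≠ f u.succ) : Unseparated f u.castSucc u.succ := by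
  intro a b hab
  have := (em (a = u.succ ∨ b = u.succ)).imp (eq_of_apply_eq_of_isolated hu hab) not_or.1
  simp only [Fin.le_def, Fin.lt_def, Fin.val_castSucc, Fin.val_succ, Fin.ext_iff] at this ⊢
  omega

lemma le_succAbove_and_succAbove_lt_iff (u : Fin (n + 1)) (a b : Fin (n + 2)) (k : Fin (n + 1)) :
    a ≤ u.castSucc.succAbove k ∧ u.castSucc.succAbove k < b ↔
      u.predAbove a ≤ k ∧ k < u.predAbove b := by
  simp only [Fin.succAbove, Fin.predAbove, Fin.lt_def, Fin.le_def, Fin.val_castSucc,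
    apply_dite Fin.val, Fin.val_pred, Fin.coe_castPred, dite_eq_ite, apply_ite Fin.val,
    Fin.val_succ]
  split_ifs <;> omega

lemma comp_predAbove_of_adjacent {f : Fin (n + 2) → β} {u : Fin (n + 1)}
    (hu : f u.castSucc = f u.succ) : (f ∘ u.succ.succAbove) ∘ u.predAbove = f := by
  funext x
  by_cases hx : x = u.succ
  · simp [hx, hu]
  · simp [Fin.succ_succAbove_predAbove hx]

/-- Merging the neighbours `u` and `u + 1` of equal colour (by `predAbove u`) keeps every chord;
the arcs of the merged circle are those of the old one except arc `u`. -/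
lemma unseparated_succAbove_iff_of_adjacent {f : Fin (n + 2) → β} {u : Fin (n + 1)}
    (hu : f u.castSucc = f u.succ) {k l : Fin (n + 1)} :
    Unseparated (f ∘ u.succ.succAbove) k l ↔
      Unseparated f (u.castSucc.succAbove k) (u.castSucc.succAbove l) := by
  conv_rhs => rw [← comp_predAbove_of_adjacent hu]
  refine ⟨fun h a b hab => ?_, fun h a b hab => ?_⟩
  · simpa only [le_succAbove_and_succAbove_lt_iff] using h _ _ hab
  · obtain ⟨a, rfl⟩ := Fin.predAbove_surjective u a
    obtain ⟨b, rfl⟩ := Fin.predAbove_surjective u b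
    simpa only [le_succAbove_and_succAbove_lt_iff] using h a b hab

lemma not_unseparated_castSucc_of_adjacent {f : Fin (n + 2) → β} {u : Fin (n + 1)}
    (hu : f u.castSucc = f u.succ) {x : Fin (n + 2)} (hx : x ≠ u.castSucc) :
    ¬ Unseparated f x u.castSucc := fun h => by
  have := h _ _ hu
  simp only [Fin.le_def, Fin.lt_def, Fin.val_castSucc, Fin.val_succ, ne_eq, Fin.ext_iff] at this hx
  omega

end Deletion

section Induction

variable {n : ℕ}

/-- If a shortest chord `(a, b)` does not join neighbours, the point `a + 1` is isolated: a chord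
from `a + 1` would be shorter or would cross `(a, b)`. -/
lemma exists_isolated_or_adjacent {f : Fin (n + 2) → β} (hf : IsNoncrossingColoring f) :
    (∃ u : Fin (n + 1), ∀ b ≠ u.succ, f b ≠ f u.succ) ∨
      ∃ u : Fin (n + 1), f u.castSucc = f u.succ := by
  classical
  by_cases hadj : ∃ u : Fin (n + 1), f u.castSucc = f u.succ
  · exact Or.inr hadj
  simp only [not_exists] at hadj
  left
  by_cases hchord : ∃ a b, a < b ∧ f a = f b
  · obtain ⟨a₀, b₀, hchord⟩ := hchord
    obtain ⟨⟨a, b⟩, hab, hmin⟩ :=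
      exists_min_image {p : Fin (n + 2) × Fin (n + 2) | p.1 < p.2 ∧ f p.1 = f p.2}
        (fun p => (p.2 : ℕ) - p.1) ⟨(a₀, b₀), by simpa using hchord⟩
    simp only [mem_filter, mem_univ, true_and, Prod.forall] at hab hmin
    obtain ⟨hab, hfab⟩ := hab
    obtain ⟨u, rfl⟩ := Fin.exists_castSucc_eq.mpr (Fin.ne_last_of_lt hab)
    refine ⟨u, fun d hd hfd => ?_⟩
    have hb : u.succ ≠ b := fun h => hadj u (h ▸ hfab)
    have hu : (u.succ : ℕ) = u + 1 := Fin.val_succ u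
    have hu' : (u.castSucc : ℕ) = u := Fin.val_castSucc u
    rcases lt_trichotomy d u.castSucc with hdu | rfl | hud
    · exact hadj u ((hf d u.succ u.castSucc b hdu Fin.castSucc_lt_succ
        (by omega) hfd hfab).symm.trans hfd)
    · exact hadj u hfd
    rcases lt_trichotomy d b with hdb | rfl | hbd
    · have := hmin u.succ d ⟨by omega, hfd.symm⟩
      omega
    · exact hadj u (hfab.trans hfd)
    · exact hadj u (hf u.castSucc b u.succ d Fin.castSucc_lt_succ (by omega) hbd hfab
        hfd.symm)
  · refine ⟨0, fun d hd hfd => hchord ?_⟩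
    rcases lt_or_gt_of_ne hd with h | h
    exacts [⟨d, _, h, hfd⟩, ⟨_, d, h, hfd.symm⟩]

theorem classCount_add_classCount_unseparated :
    ∀ {n : ℕ} (f : Fin (n + 1) → β), IsNoncrossingColoring f →
      classCount (fun a b => f a = f b) + classCount (Unseparated f) = n + 2
  | 0, f, _ => by rw [classCount_fin_one, classCount_fin_one]
  | n + 1, f, hf => by
    rcases exists_isolated_or_adjacent hf with ⟨u, hu⟩ | ⟨u, hu⟩
    · have ih := classCount_add_classCount_unseparated (f ∘ u.succ.succAbove)
        (hf.comp_strictMono (Fin.strictMono_succAbove _))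
      rw [classCount_succAbove_of_isolated (eq_equivalence.comap f) hu,
        classCount_succAbove_of_rel (unseparated_equivalence f) Fin.castSucc_lt_succ
          (unseparated_castSucc_succ_of_isolated hu),
        classCount_congr fun k l => (unseparated_succAbove_iff_of_isolated hu).symm]
      exact (add_right_comm _ _ _).trans (congrArg (· + 1) ih)
    · have ih := classCount_add_classCount_unseparated (f ∘ u.succ.succAbove)
        (hf.comp_strictMono (Fin.strictMono_succAbove _))
      rw [classCount_succAbove_of_rel (eq_equivalence.comap f) Fin.castSucc_lt_succ hu,
        classCount_succAbove_of_isolated (unseparated_equivalence f)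
          fun x hx => not_unseparated_castSucc_of_adjacent hu hx,
        classCount_congr fun k l => (unseparated_succAbove_iff_of_adjacent hu).symm]
      exact (add_assoc _ _ _).symm.trans (congrArg (· + 1) ih)

end Induction

section Finpartition

variable {s : Finset α} [DecidableEq α] {P Q : Finpartition s} {a b : α}

lemma sameBlock_iff_mem_part : SameBlock P a b ↔ b ∈ P.part a := by
  simp only [SameBlock, P.mem_part_iff_exists, and_comm]

lemma SameBlock.symm (h : SameBlock P a b) : SameBlock P b a :=
  let ⟨B, hB, ha, hb⟩ := h
  ⟨B, hB, hb, ha⟩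

lemma SameBlock.mono (h : SameBlock P a b) (hPQ : P ≤ Q) : SameBlock Q a b :=
  let ⟨_, hB, ha, hb⟩ := h
  let ⟨C, hC, hBC⟩ := hPQ hB
  ⟨C, hC, hBC ha, hBC hb⟩

end Finpartition

section Disk

variable {n : ℕ} {π ρ σ : Finpartition (univ : Finset (Fin n))} {a b i j : Fin n}

lemma sameBlock_iff_part_eq_part : SameBlock π a b ↔ π.part a = π.part b := by
  rw [sameBlock_iff_mem_part, π.mem_part_iff_part_eq_part (mem_univ b) (mem_univ a), eq_comm]

lemma card_parts_eq_classCount (π : Finpartition (univ : Finset (Fin n))) :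
    #π.parts = classCount (SameBlock π) := by
  refine (card_nbij π.part (fun j _ => π.part_mem.2 (mem_univ j)) ?_ ?_).symm
  · intro i hi j hj hij
    simp only [coe_filter, mem_univ, true_and, Set.mem_ofPred_eq] at hi hj
    have hsame : SameBlock π i j := sameBlock_iff_part_eq_part.2 hij
    rcases lt_trichotomy i j with h | h | h
    exacts [absurd hsame (hj i h), h, absurd hsame.symm (hi j h)]
  · intro B hB
    have hne : B.Nonempty := π.nonempty_of_mem_parts hB
    refine ⟨B.min' hne, ?_, π.part_eq_of_mem hB (B.min'_mem _)⟩
    simp only [coe_filter, mem_univ, true_and, Set.mem_ofPred_eq]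
    intro i hi hsame
    rw [sameBlock_iff_part_eq_part, π.part_eq_of_mem hB (B.min'_mem _),
      π.part_eq_iff_mem hB] at hsame
    exact (B.min'_le i hsame).not_gt hi

lemma IsNoncrossing.isNoncrossingColoring_part (hπ : IsNoncrossing π) :
    IsNoncrossingColoring π.part := fun a b c d hac hcb hbd hab hcd =>
  sameBlock_iff_part_eq_part.1 <| hπ a b c d hac hcb hbd (sameBlock_iff_part_eq_part.2 hab)
    (sameBlock_iff_part_eq_part.2 hcd)

lemma diskPt_lt_diskPt_iff : diskPt a < diskPt b ↔ a < b := by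
  simp only [Fin.lt_def, diskPt]; omega

lemma diskArc_lt_diskArc_iff : diskArc i < diskArc j ↔ i < j := by
  simp only [Fin.lt_def, diskArc]; omega

lemma diskPt_lt_diskArc_iff : diskPt a < diskArc i ↔ a ≤ i := by
  simp only [Fin.lt_def, Fin.le_def, diskPt, diskArc]; omega

lemma diskArc_lt_diskPt_iff : diskArc i < diskPt a ↔ i < a := by
  simp only [Fin.lt_def, diskPt, diskArc]; omega

lemma diskPt_ne_diskArc : diskPt a ≠ diskArc i := by
  simp only [ne_eq, Fin.ext_iff, diskPt, diskArc]
  omega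

lemma not_combRel_diskPt_diskArc : ¬ CombRel π ρ (diskPt a) (diskArc i) := by
  rintro (⟨_, _, -, h, -⟩ | ⟨_, _, h, -, -⟩)
  exacts [diskPt_ne_diskArc h.symm, diskPt_ne_diskArc h]

lemma not_combRel_diskArc_diskPt : ¬ CombRel π ρ (diskArc i) (diskPt a) := by
  rintro (⟨_, _, h, -, -⟩ | ⟨_, _, -, h, -⟩)
  exacts [diskPt_ne_diskArc h.symm, diskPt_ne_diskArc h]

lemma Compat.le_and_lt_of_le_of_lt (hc : Compat π ρ) (hab : SameBlock π a b)
    (hij : SameBlock ρ i j) (hai : a ≤ i) (hib : i < b) : a ≤ j ∧ j < b := by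
  by_contra h
  rw [not_and_or, not_le, not_lt] at h
  rcases h with hja | hbj
  · exact not_combRel_diskArc_diskPt (hc _ _ _ _ (diskArc_lt_diskPt_iff.2 hja)
      (diskPt_lt_diskArc_iff.2 hai) (diskArc_lt_diskPt_iff.2 hib)
      (Or.inr ⟨j, i, rfl, rfl, hij.symm⟩) (Or.inl ⟨a, b, rfl, rfl, hab⟩))
  · exact not_combRel_diskPt_diskArc (hc _ _ _ _ (diskPt_lt_diskArc_iff.2 hai)
      (diskArc_lt_diskPt_iff.2 hib) (diskPt_lt_diskArc_iff.2 hbj)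
      (Or.inl ⟨a, b, rfl, rfl, hab⟩) (Or.inr ⟨i, j, rfl, rfl, hij⟩))

lemma Compat.unseparated (hc : Compat π ρ) (hij : SameBlock ρ i j) : Unseparated π.part i j :=
  fun a b hab =>
    have hab : SameBlock π a b := sameBlock_iff_part_eq_part.2 hab
    ⟨fun h => hc.le_and_lt_of_le_of_lt hab hij h.1 h.2,
      fun h => hc.le_and_lt_of_le_of_lt hab hij.symm h.1 h.2⟩

lemma compat_of_sameBlock_iff_unseparated (hπ : IsNoncrossing π)
    (hσ : ∀ i j, SameBlock σ i j ↔ Unseparated π.part i j) : Compat π σ := by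
  rintro x y u v hxu huy hyv (⟨a, b, rfl, rfl, hab⟩ | ⟨i, j, rfl, rfl, hij⟩)
    (⟨c, d, rfl, rfl, hcd⟩ | ⟨k, l, rfl, rfl, hkl⟩)
  · simp only [diskPt_lt_diskPt_iff] at hxu huy hyv
    exact Or.inl ⟨a, c, rfl, rfl, hπ a b c d hxu huy hyv hab hcd⟩
  · simp only [diskPt_lt_diskArc_iff, diskArc_lt_diskPt_iff] at hxu huy hyv
    have := (hσ k l).1 hkl a b (sameBlock_iff_part_eq_part.1 hab)
    omega
  · simp only [diskPt_lt_diskArc_iff, diskArc_lt_diskPt_iff] at hxu huy hyv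
    have := (hσ i j).1 hij c d (sameBlock_iff_part_eq_part.1 hcd)
    omega
  · simp only [diskArc_lt_diskArc_iff] at hxu huy hyv
    refine Or.inr ⟨i, k, rfl, rfl, (hσ i k).2 fun p q hpq => ?_⟩
    have := (hσ i j).1 hij p q hpq
    have := (hσ k l).1 hkl p q hpq
    omega

lemma IsKreweras.sameBlock_iff (hπ : IsNoncrossing π) (hρ : IsKreweras π ρ) :
    SameBlock ρ i j ↔ Unseparated π.part i j := by
  classical
  let σ := Finpartition.ofSetoid ⟨Unseparated π.part, unseparated_equivalence π.part⟩
  have hσ : ∀ i j, SameBlock σ i j ↔ Unseparated π.part i j := fun _ _ =>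
    sameBlock_iff_mem_part.trans Finpartition.mem_part_ofSetoid_iff_rel
  exact ⟨hρ.1.unseparated,
    fun h => ((hσ i j).2 h).mono (hρ.2 σ (compat_of_sameBlock_iff_unseparated hπ hσ))⟩

end Disk

/-- For any non-crossing partition `π` of a finite cyclically ordered set with `n` elements,
the number of blocks of `π` plus the number of blocks of its Kreweras complement equals
`n + 1`. -/
theorem blocks_add_blocks_kreweras (n : ℕ) (hn : 0 < n)
    (π ρ : Finpartition (univ : Finset (Fin n)))
    (hπ : IsNoncrossing π) (hρ : IsKreweras π ρ) :
    π.parts.card + ρ.parts.card = n + 1 := by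
  obtain ⟨m, rfl⟩ : ∃ m, n = m + 1 := ⟨n - 1, by omega⟩
  rw [card_parts_eq_classCount, card_parts_eq_classCount,
    classCount_congr fun _ _ => sameBlock_iff_part_eq_part,
    classCount_congr fun _ _ => hρ.sameBlock_iff hπ]
  exact classCount_add_classCount_unseparated _ hπ.isNoncrossingColoring_part
end

section
/- The Stieltjes transform m(z) of the semicircle distribution satisfies the Dyson equation -1/m(z) = m(z) + z for all z ∈ ℂ \ ℝ, together with the sign condition Im(z)·Im(m(z)) > 0. -/
open MeasureTheory

/-- The semicircle density `ρ_sc(x) = √(4 - x²) / (2π)` on `[-2, 2]`. -/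
noncomputable def rhoSc (x : ℝ) : ℝ := Real.sqrt (4 - x ^ 2) / (2 * Real.pi)

/-- The Stieltjes transform of the semicircle distribution, with the sign convention
`m(z) = (√(z² - 4) - z)/2` (so that `Im z · Im m(z) > 0`). -/
noncomputable def msc (z : ℂ) : ℂ := ∫ x in (-2 : ℝ)..2, (rhoSc x : ℂ) / ((x : ℂ) - z)

/-!
Differentiating under the integral sign and integrating by parts against `ρ(x) (4 - x²)`, which
vanishes at `±2` and has derivative `-3 x ρ(x)`, gives the linear ODE `(4 - z²) m' = -2 - z m` off
the real line. Hence `P = m² + z m + 1` satisfies `(4 - z²) P' = -2 z P`, i.e. `P / (z² - 4)` is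
locally constant. On the upper half-plane this constant is the limit along `z = i t`, `t → ∞`,
which is `0` because `|m(z)| ≤ 1 / |Im z|`; the lower half-plane follows from `m(z̄) = conj m(z)`.
Dividing `P = 0` by `m` is the Dyson equation, and the sign condition is
`Im m(z) = Im z · ∫ ρ(x) / |x - z|² dx`.
-/

open Complex Set intervalIntegral Filter Topology
open scoped ComplexConjugate Interval

theorem ofReal_sub_ne_zero_of_im_ne_zero {z : ℂ} (hz : z.im ≠ 0) (x : ℝ) : (x : ℂ) - z ≠ 0 :=
  fun h => hz (by simpa using congrArg im h)

theorem abs_im_le_norm_ofReal_sub (z : ℂ) (x : ℝ) : |z.im| ≤ ‖(x : ℂ) - z‖ := by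
  simpa using abs_im_le_norm ((x : ℂ) - z)

theorem sq_sub_four_ne_zero_of_im_ne_zero {z : ℂ} (hz : z.im ≠ 0) : z ^ 2 - 4 ≠ 0 := by
  have hsub : z - 2 ≠ 0 := fun h => hz (by simpa using congrArg im h)
  have hadd : z + 2 ≠ 0 := fun h => hz (by simpa using congrArg im h)
  rw [show z ^ 2 - 4 = (z - 2) * (z + 2) by ring]
  exact mul_ne_zero hsub hadd

section CauchyTransform

variable {f : ℝ → ℂ} {a b : ℝ} {z : ℂ}

theorem intervalIntegrable_div_ofReal_sub_pow (hf : IntervalIntegrable f volume a b)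
    (hz : z.im ≠ 0) (n : ℕ) :
    IntervalIntegrable (fun x : ℝ => f x / ((x : ℂ) - z) ^ n) volume a b := by
  simp_rw [div_eq_mul_inv]
  exact hf.mul_continuousOn (Continuous.continuousOn (by
    have := fun x => pow_ne_zero n (ofReal_sub_ne_zero_of_im_ne_zero hz x)
    fun_prop (disch := exact this _)))

theorem hasDerivAt_integral_div_ofReal_sub (hf : IntervalIntegrable f volume a b)
    (hz : z.im ≠ 0) :
    HasDerivAt (fun w => ∫ x in a..b, f x / ((x : ℂ) - w))
      (∫ x in a..b, f x / ((x : ℂ) - z) ^ 2) z := by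
  set ε := |z.im| / 2 with hε_def
  have hε : 0 < ε := by positivity
  have hε_le : ∀ w ∈ Metric.ball z ε, ε ≤ |w.im| := by
    intro w hw
    have him : |z.im - w.im| ≤ dist z w := by
      simpa [dist_eq] using abs_im_le_norm (z - w)
    have := abs_sub_abs_le_abs_sub z.im w.im
    rw [Metric.mem_ball, dist_comm] at hw
    linarith
  have him : ∀ w ∈ Metric.ball z ε, w.im ≠ 0 := fun w hw =>
    abs_pos.mp (hε.trans_le (hε_le w hw))
  refine (hasDerivAt_integral_of_dominated_loc_of_deriv_le
    (F := fun w x => f x / ((x : ℂ) - w)) (F' := fun w x => f x / ((x : ℂ) - w) ^ 2)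
    (bound := fun x => ‖f x‖ / ε ^ 2) (Metric.ball_mem_nhds z hε) ?_
    (by simpa using intervalIntegrable_div_ofReal_sub_pow hf hz 1)
    (intervalIntegrable_div_ofReal_sub_pow hf hz 2).def'.aestronglyMeasurable ?_
    (hf.norm.div_const _) ?_).2
  · filter_upwards [Metric.isOpen_ball.mem_nhds (Metric.mem_ball_self hε)] with w hw
    simpa using (intervalIntegrable_div_ofReal_sub_pow hf (him w hw) 1).def'.aestronglyMeasurable
  · refine ae_of_all _ fun x _ w hw => ?_
    rw [norm_div, norm_pow]
    gcongr
    exact (hε_le w hw).trans (abs_im_le_norm_ofReal_sub w x)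
  · refine ae_of_all _ fun x _ w hw => ?_
    have hne := ofReal_sub_ne_zero_of_im_ne_zero (him w hw) x
    simpa [div_eq_mul_inv] using (((hasDerivAt_id w).const_sub (x : ℂ)).inv hne).const_mul (f x)

theorem norm_integral_div_ofReal_sub_le (hab : a ≤ b) (hf : IntervalIntegrable f volume a b)
    (hz : z.im ≠ 0) :
    ‖∫ x in a..b, f x / ((x : ℂ) - z)‖ ≤ (∫ x in a..b, ‖f x‖) / |z.im| := by
  rw [← intervalIntegral.integral_div]
  refine norm_integral_le_of_norm_le hab (ae_of_all _ fun x _ => ?_) (hf.norm.div_const _)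
  rw [norm_div]
  gcongr
  exact abs_im_le_norm_ofReal_sub z x

theorem im_integral_ofReal_div_ofReal_sub {g : ℝ → ℝ} (hg : IntervalIntegrable g volume a b)
    (hz : z.im ≠ 0) :
    (∫ x in a..b, (g x : ℂ) / ((x : ℂ) - z)).im =
      z.im * ∫ x in a..b, g x / normSq ((x : ℂ) - z) := by
  have hint : IntervalIntegrable (fun x : ℝ => (g x : ℂ)) volume a b :=
    ⟨hg.1.ofReal, hg.2.ofReal⟩
  have h := intervalIntegral_im (by simpa using intervalIntegrable_div_ofReal_sub_pow hint hz 1)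
  simp only [RCLike.im_to_complex] at h
  rw [← h, ← intervalIntegral.integral_const_mul]
  congr 1 with x
  simp [div_im]
  ring

theorem integral_deriv_div_ofReal_sub {g g' : ℝ → ℂ} (hg : ContinuousOn g [[a, b]])
    (hgg' : ∀ x ∈ Ioo (min a b) (max a b), HasDerivAt g (g' x) x)
    (hg' : IntervalIntegrable g' volume a b) (ha : g a = 0) (hb : g b = 0) (hz : z.im ≠ 0) :
    ∫ x in a..b, g' x / ((x : ℂ) - z) = ∫ x in a..b, g x / ((x : ℂ) - z) ^ 2 := by
  have hne := ofReal_sub_ne_zero_of_im_ne_zero hz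
  have hu : ∀ x : ℝ, HasDerivAt (fun x : ℝ => ((x : ℂ) - z)⁻¹) (-1 / ((x : ℂ) - z) ^ 2) x :=
    fun x => by simpa using ((hasDerivAt_id x).ofReal_comp.sub_const z).fun_inv (hne x)
  have hcont : Continuous fun x : ℝ => ((x : ℂ) - z)⁻¹ :=
    continuous_iff_continuousAt.2 fun x => (hu x).continuousAt
  have := integral_mul_deriv_eq_deriv_mul_of_hasDerivAt hcont.continuousOn hg
    (fun x _ => hu x) hgg' (intervalIntegrable_div_ofReal_sub_pow intervalIntegrable_const hz 2)
    hg'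
  simpa [ha, hb, div_eq_inv_mul] using this

end CauchyTransform

@[fun_prop]
theorem continuous_rhoSc : Continuous rhoSc := by
  unfold rhoSc
  fun_prop

theorem rhoSc_nonneg (x : ℝ) : 0 ≤ rhoSc x := by
  unfold rhoSc
  positivity

theorem rhoSc_pos {x : ℝ} (hx : x ∈ Ioo (-2 : ℝ) 2) : 0 < rhoSc x :=
  div_pos (Real.sqrt_pos.mpr (by nlinarith [hx.1, hx.2])) (by positivity)

theorem integral_rhoSc : ∫ x in (-2 : ℝ)..2, rhoSc x = 1 := by
  have hsqrt : ∀ u : ℝ, Real.sqrt (4 - (2 * u) ^ 2) = 2 * Real.sqrt (1 - u ^ 2) := fun u => by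
    rw [show 4 - (2 * u) ^ 2 = 2 ^ 2 * (1 - u ^ 2) by ring, Real.sqrt_mul (by norm_num),
      Real.sqrt_sq (by norm_num)]
  have h := integral_comp_mul_left (fun x => Real.sqrt (4 - x ^ 2))
    (a := -1) (b := 1) (two_ne_zero' ℝ)
  simp only [hsqrt, intervalIntegral.integral_const_mul, integral_sqrt_one_sub_sq] at h
  norm_num at h
  simp only [rhoSc, intervalIntegral.integral_div]
  field_simp
  linarith

theorem hasDerivAt_rhoSc_mul {x : ℝ} (hx : x ∈ Ioo (-2 : ℝ) 2) :
    HasDerivAt (fun x => rhoSc x * (4 - x ^ 2)) (-3 * x * rhoSc x) x := by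
  have hpos : 0 < 4 - x ^ 2 := by nlinarith [hx.1, hx.2]
  have hq : HasDerivAt (fun x : ℝ => 4 - x ^ 2) (-(2 * x)) x := by
    simpa using (hasDerivAt_pow 2 x).const_sub 4
  unfold rhoSc
  refine (((hq.sqrt hpos.ne').div_const (2 * Real.pi)).mul hq).congr_deriv ?_
  field_simp
  rw [Real.sq_sqrt hpos.le]
  ring

theorem intervalIntegrable_rhoSc (a b : ℝ) :
    IntervalIntegrable (fun x => (rhoSc x : ℂ)) volume a b :=
  (continuous_ofReal.comp continuous_rhoSc).intervalIntegrable a b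

theorem norm_msc_le {z : ℂ} (hz : z.im ≠ 0) : ‖msc z‖ ≤ 1 / |z.im| := by
  have h := norm_integral_div_ofReal_sub_le (by norm_num : (-2 : ℝ) ≤ 2)
    (intervalIntegrable_rhoSc _ _) hz
  simpa [msc, abs_of_nonneg (rhoSc_nonneg _), integral_rhoSc] using h

theorem hasDerivAt_msc {z : ℂ} (hz : z.im ≠ 0) :
    HasDerivAt msc (∫ x in (-2 : ℝ)..2, (rhoSc x : ℂ) / ((x : ℂ) - z) ^ 2) z :=
  hasDerivAt_integral_div_ofReal_sub (intervalIntegrable_rhoSc _ _) hz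

theorem integral_add_div_add_div_sq_mul_rhoSc {z : ℂ} (hz : z.im ≠ 0) (α β γ : ℂ) :
    ∫ x in (-2 : ℝ)..2, (α + β / ((x : ℂ) - z) + γ / ((x : ℂ) - z) ^ 2) * rhoSc x =
      α + β * msc z + γ * deriv msc z := by
  have h0 := intervalIntegrable_rhoSc (-2) 2
  have h1 := (intervalIntegrable_div_ofReal_sub_pow h0 hz 1).const_mul β
  have h2 := (intervalIntegrable_div_ofReal_sub_pow h0 hz 2).const_mul γ
  simp only [pow_one] at h1
  rw [(hasDerivAt_msc hz).deriv, msc, ← intervalIntegral.integral_const_mul,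
    ← intervalIntegral.integral_const_mul]
  calc _ = ∫ x in (-2 : ℝ)..2, α * (rhoSc x : ℂ) + β * ((rhoSc x : ℂ) / ((x : ℂ) - z)) +
          γ * ((rhoSc x : ℂ) / ((x : ℂ) - z) ^ 2) :=
        integral_congr fun x _ => by ring
    _ = _ := by
        rw [integral_add ((h0.const_mul α).add h1) h2,
          integral_add (h0.const_mul α) h1, intervalIntegral.integral_const_mul,
          integral_ofReal, integral_rhoSc, ofReal_one, mul_one]

theorem four_sub_sq_mul_deriv_msc {z : ℂ} (hz : z.im ≠ 0) : (4 - z ^ 2) * deriv msc z = -2 - z * msc z := by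
  have hne := ofReal_sub_ne_zero_of_im_ne_zero hz
  have hparts := integral_deriv_div_ofReal_sub (a := -2) (b := 2)
    (g := fun x => ((rhoSc x * (4 - x ^ 2) : ℝ) : ℂ))
    (g' := fun x => ((-3 * x * rhoSc x : ℝ) : ℂ))
    (Continuous.continuousOn (by fun_prop))
    (fun x hx => (hasDerivAt_rhoSc_mul (by simpa using hx)).ofReal_comp)
    (Continuous.intervalIntegrable (by fun_prop) _ _) (by norm_num) (by norm_num) hz
  have hlhs : ∫ x in (-2 : ℝ)..2, ((-3 * x * rhoSc x : ℝ) : ℂ) / ((x : ℂ) - z) =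
      ∫ x in (-2 : ℝ)..2, (-3 + (-3 * z) / ((x : ℂ) - z) + 0 / ((x : ℂ) - z) ^ 2) * rhoSc x :=
    integral_congr fun x _ => by
      field_simp [hne x]
      push_cast
      ring
  have hrhs : ∫ x in (-2 : ℝ)..2, ((rhoSc x * (4 - x ^ 2) : ℝ) : ℂ) / ((x : ℂ) - z) ^ 2 =
      ∫ x in (-2 : ℝ)..2, (-1 + (-2 * z) / ((x : ℂ) - z) + (4 - z ^ 2) / ((x : ℂ) - z) ^ 2) *
        rhoSc x :=
    integral_congr fun x _ => by
      field_simp [hne x]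
      push_cast
      ring
  rw [hlhs, hrhs, integral_add_div_add_div_sq_mul_rhoSc hz,
    integral_add_div_add_div_sq_mul_rhoSc hz] at hparts
  linear_combination -hparts

noncomputable def dysonQuotient (z : ℂ) : ℂ := (msc z ^ 2 + z * msc z + 1) / (z ^ 2 - 4)

theorem hasDerivAt_dysonQuotient {z : ℂ} (hz : z.im ≠ 0) : HasDerivAt dysonQuotient 0 z := by
  have hm := hasDerivAt_msc hz
  have := (((hm.pow 2).add ((hasDerivAt_id z).mul hm)).add_const 1).div
    ((hasDerivAt_pow 2 z).sub_const 4) (sq_sub_four_ne_zero_of_im_ne_zero hz)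
  refine this.congr_deriv ?_
  rw [← hm.deriv, div_eq_zero_iff]
  left
  simp only [id, Pi.add_apply, Pi.mul_apply, Pi.pow_apply]
  linear_combination (-(2 * msc z + z)) * four_sub_sq_mul_deriv_msc hz

theorem norm_dysonQuotient_I_mul_le {t : ℝ} (ht : 1 ≤ t) :
    ‖dysonQuotient (I * t)‖ ≤ 3 / (t ^ 2 + 4) := by
  have ht0 : 0 < t := by linarith
  set m := msc (I * t)
  have hm : t * ‖m‖ ≤ 1 := by
    have := norm_msc_le (z := I * t) (by simp [ht0.ne'])
    rw [le_div_iff₀ (by simp [ht0.ne'])] at this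
    simpa [abs_of_pos ht0, mul_comm] using this
  have hnum : ‖m ^ 2 + I * t * m + 1‖ ≤ 3 := calc
    _ ≤ ‖m ^ 2‖ + ‖I * t * m‖ + ‖(1 : ℂ)‖ := norm_add₃_le
    _ = ‖m‖ ^ 2 + t * ‖m‖ + 1 := by simp [abs_of_pos ht0]
    _ ≤ 3 := by nlinarith [norm_nonneg m]
  have hden : ‖(I * t) ^ 2 - 4‖ = t ^ 2 + 4 := by
    rw [show (I * t) ^ 2 - 4 = -((t ^ 2 + 4 : ℝ) : ℂ) by push_cast; ring_nf; simp [I_sq]; ring,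
      norm_neg, norm_real, Real.norm_of_nonneg (by positivity)]
  rw [dysonQuotient, norm_div, hden]
  gcongr

theorem dysonQuotient_eq_zero_of_im_pos {z : ℂ} (hz : 0 < z.im) : dysonQuotient z = 0 := by
  have hconst : ∀ w : ℂ, 0 < w.im → dysonQuotient w = dysonQuotient z := fun w hw =>
    (isOpen_lt continuous_const continuous_im).is_const_of_deriv_eq_zero
      (convex_halfSpace_im_gt 0).isPreconnected
      (fun u hu => (hasDerivAt_dysonQuotient hu.ne').differentiableAt.differentiableWithinAt)
      (fun u hu => (hasDerivAt_dysonQuotient hu.ne').deriv) hw hz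
  have hbound : ∀ t : ℝ, 1 ≤ t → ‖dysonQuotient z‖ ≤ 3 / (t ^ 2 + 4) := fun t ht =>
    hconst (I * t) (by simp; linarith) ▸ norm_dysonQuotient_I_mul_le ht
  have hlim : Tendsto (fun t : ℝ => 3 / (t ^ 2 + 4)) atTop (𝓝 0) :=
    tendsto_const_nhds.div_atTop
      (tendsto_atTop_add_const_right _ _ (tendsto_pow_atTop two_ne_zero))
  exact norm_le_zero_iff.mp (ge_of_tendsto hlim (eventually_atTop.2 ⟨1, hbound⟩))

theorem msc_conj (z : ℂ) : msc (conj z) = conj (msc z) := by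
  simp only [msc, ← intervalIntegral_conj, map_div₀, map_sub, conj_ofReal]

theorem msc_sq_add_mul_add_one_eq_zero {z : ℂ} (hz : z.im ≠ 0) :
    msc z ^ 2 + z * msc z + 1 = 0 := by
  have hupper : ∀ w : ℂ, 0 < w.im → msc w ^ 2 + w * msc w + 1 = 0 := fun w hw =>
    (div_eq_zero_iff.mp (dysonQuotient_eq_zero_of_im_pos hw)).resolve_right
      (sq_sub_four_ne_zero_of_im_ne_zero hw.ne')
  rcases hz.lt_or_gt with hneg | hpos
  · simpa [msc_conj] using congrArg conj (hupper (conj z) (by simpa using hneg))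
  · exact hupper z hpos

theorem im_mul_im_msc_pos {z : ℂ} (hz : z.im ≠ 0) : 0 < z.im * (msc z).im := by
  have hnormSq : ∀ x : ℝ, 0 < normSq ((x : ℂ) - z) :=
    fun x => normSq_pos.2 (ofReal_sub_ne_zero_of_im_ne_zero hz x)
  rw [msc, im_integral_ofReal_div_ofReal_sub (continuous_rhoSc.intervalIntegrable _ _) hz,
    ← mul_assoc]
  refine mul_pos (mul_self_pos.2 hz) (intervalIntegral_pos_of_pos_on ?_
    (fun x hx => div_pos (rhoSc_pos hx) (hnormSq x)) (by norm_num))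
  exact (continuous_rhoSc.div (by fun_prop) fun x => (hnormSq x).ne').intervalIntegrable _ _

/-- The Stieltjes transform `m` of the semicircle distribution satisfies the Dyson equation
`-1/m(z) = m(z) + z` for all `z ∈ ℂ \ ℝ`, together with the sign condition
`Im(z) · Im(m(z)) > 0`. -/
theorem msc_dyson_equation (z : ℂ) (hz : z.im ≠ 0) :
    (-1 : ℂ) / msc z = msc z + z ∧ 0 < z.im * (msc z).im := by
  have hquad := msc_sq_add_mul_add_one_eq_zero hz
  have hm : msc z ≠ 0 := fun h => by simp [h] at hquad
  refine ⟨?_, im_mul_im_msc_pos hz⟩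
  rw [div_eq_iff hm]
  linear_combination -hquad
end

section
/- For any annular non-crossing permutation π of the (k,ℓ)-annulus, the number of cycles of π plus the number of cycles of its annular Kreweras complement K(π) equals k + ℓ. -/
/-!
Count the cycles of a permutation `σ` of `n` points as its `SameCycle` classes, fixed points
included. Multiplying by a transposition `(a b)` either merges the cycles of `a` and `b` or
splits their common cycle, so the count changes by at most one; multiplying by `(x σx)` splits
`x` off as a fixed point, so it rises by exactly one. Hence the reflection length of `σ` is
`n` minus its number of cycles. The boundary permutation `γ` has two cycles, so the condition
`|π| + |π⁻¹γ| = |γ| + 2` turns into `#cycles π + #cycles (π⁻¹γ) = n = k + ℓ`.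
-/

open Equiv

/-- The reflection length of a permutation: the minimal number of transpositions needed to
write it as a product. -/
noncomputable def reflLen {α : Type*} [DecidableEq α] [Fintype α] (σ : Equiv.Perm α) : ℕ :=
  sInf {m | ∃ l : List (Equiv.Perm α),
    l.length = m ∧ (∀ τ ∈ l, τ.IsSwap) ∧ l.prod = σ}

/-- The number of cycles of a permutation, counting fixed points as cycles of length one. -/
noncomputable def cycleCount {α : Type*} [DecidableEq α] [Fintype α] (σ : Equiv.Perm α) : ℕ :=
  σ.cycleType.card + (Fintype.card α - σ.support.card)

/-- The boundary permutation `γ = (1 ... k)(k+1 ... k+ℓ)` of the `(k,ℓ)`-annulus, rotating the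
outer circle `Fin k` and the inner circle `Fin ℓ`. -/
def annGamma (k l : ℕ) : Equiv.Perm (Fin k ⊕ Fin l) :=
  Equiv.sumCongr (finRotate k) (finRotate l)

/-- A permutation of the `(k,ℓ)`-annulus connects the two circles if some cycle contains a
point of each. -/
def Connects {k l : ℕ} (π : Equiv.Perm (Fin k ⊕ Fin l)) : Prop :=
  ∃ (x : Fin k) (y : Fin l), π.SameCycle (Sum.inl x) (Sum.inr y)

/-- Annular non-crossing permutations of the `(k,ℓ)`-annulus: permutations connecting the two
circles whose cycles can be drawn in the annulus without crossings and with standard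
orientation; equivalently (Mingo–Nica), permutations `π` connecting the two circles such that
the reflection lengths satisfy `|π| + |π⁻¹γ| = |γ| + 2`. -/
def IsAnnularNC (k l : ℕ) (π : Equiv.Perm (Fin k ⊕ Fin l)) : Prop :=
  Connects π ∧ reflLen π + reflLen (π⁻¹ * annGamma k l) = reflLen (annGamma k l) + 2

namespace Finset

variable {α β γ : Type*} [DecidableEq γ] {s : Finset α} {f : α → β} {g : α → γ}

theorem card_image_le_card_of_factors {t : Finset β}
    (hfg : ∀ x ∈ s, ∀ y ∈ s, f x = f y → g x = g y)
    (ht : ∀ x ∈ s, ∃ y ∈ s, g y = g x ∧ f y ∈ t) : #(s.image g) ≤ #t := by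
  refine card_le_card_of_forall_subsingleton (fun c b => ∃ x ∈ s, g x = c ∧ f x = b) ?_ ?_
  · simp only [mem_image, forall_exists_index, and_imp, forall_apply_eq_imp_iff₂]
    intro x hx
    obtain ⟨y, hy, hgy, hfy⟩ := ht x hx
    exact ⟨f y, hfy, y, hy, hgy, rfl⟩
  · rintro b - _ ⟨-, x, hx, rfl, rfl⟩ _ ⟨-, y, hy, rfl, hxy⟩
    exact hfg x hx y hy hxy.symm

theorem card_image_le_card_image_of_factors [DecidableEq β]
    (hfg : ∀ x ∈ s, ∀ y ∈ s, f x = f y → g x = g y) : #(s.image g) ≤ #(s.image f) :=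
  card_image_le_card_of_factors hfg fun x hx => ⟨x, hx, rfl, mem_image_of_mem f hx⟩

theorem card_image_lt_card_image_of_factors [DecidableEq β] {x y : α}
    (hfg : ∀ x ∈ s, ∀ y ∈ s, f x = f y → g x = g y) (hx : x ∈ s) (hy : y ∈ s)
    (hf : f x ≠ f y) (hg : g x = g y) : #(s.image g) < #(s.image f) := by
  refine (card_image_le_card_of_factors (t := (s.image f).erase (f x)) hfg ?_).trans_lt
    (card_erase_lt_of_mem (mem_image_of_mem f hx))
  intro z hz
  by_cases hzx : f z = f x
  · exact ⟨y, hy, ((hfg z hz x hx hzx).trans hg).symm,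
      mem_erase.2 ⟨hf.symm, mem_image_of_mem f hy⟩⟩
  · exact ⟨z, hz, rfl, mem_erase.2 ⟨hzx, mem_image_of_mem f hz⟩⟩

end Finset

open Finset

namespace Equiv.Perm

variable {α : Type*}

theorem SameCycle.eq_of_invariant [Finite α] {β : Type*} {σ : Perm α} {F : α → β}
    (hF : ∀ u, F (σ u) = F u) {x y : α} (h : σ.SameCycle x y) : F x = F y := by
  obtain ⟨n, rfl⟩ := h.exists_nat_pow_eq
  clear h
  induction n with
  | zero => rfl
  | succ n ih => rw [ih, pow_succ', mul_apply, hF]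

theorem sumCongr_zpow {β : Type*} (σ : Perm α) (τ : Perm β) (i : ℤ) :
    sumCongr σ τ ^ i = sumCongr (σ ^ i) (τ ^ i) :=
  (map_zpow (sumCongrHom α β) (σ, τ) i).symm

theorem sameCycle_sumCongr_inl {β : Type*} {σ : Perm α} {τ : Perm β} {x y : α} :
    (sumCongr σ τ).SameCycle (.inl x) (.inl y) ↔ σ.SameCycle x y := by
  simp [SameCycle, sumCongr_zpow]

theorem sameCycle_sumCongr_inr {β : Type*} {σ : Perm α} {τ : Perm β} {x y : β} :
    (sumCongr σ τ).SameCycle (.inr x) (.inr y) ↔ τ.SameCycle x y := by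
  simp [SameCycle, sumCongr_zpow]

theorem not_sameCycle_sumCongr_inl_inr {β : Type*} (σ : Perm α) (τ : Perm β) (x : α) (y : β) :
    ¬(sumCongr σ τ).SameCycle (.inl x) (.inr y) := by
  simp [SameCycle, sumCongr_zpow]

theorem sameCycle_finRotate {n : ℕ} (x y : Fin n) : (finRotate n).SameCycle x y := by
  rcases lt_or_ge n 2 with hn | hn
  · obtain rfl : x = y := Fin.ext (by omega)
    exact SameCycle.refl _ _
  · have hfull : ∀ z, finRotate n z ≠ z := fun z =>
      mem_support.1 (support_finRotate_of_le hn ▸ mem_univ z)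
    exact (isCycle_finRotate_of_le hn).sameCycle (hfull x) (hfull y)

theorem sameCycle_swap_mul_apply [DecidableEq α] {σ : Perm α} {a b : α}
    (hab : σ.SameCycle a b) (u : α) : σ.SameCycle u ((swap a b * σ) u) := by
  have hu : σ.SameCycle u (σ u) := (SameCycle.refl σ u).apply_right
  rw [mul_apply, swap_apply_def]
  split_ifs with ha hb
  · exact (ha ▸ hu).trans hab
  · exact (hb ▸ hu).trans hab.symm
  · exact hu

variable [DecidableEq α] [Fintype α]

def cycleClass (σ : Perm α) (x : α) : Finset α := univ.filter (σ.SameCycle x)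

theorem cycleClass_eq_iff {σ : Perm α} {x y : α} :
    σ.cycleClass x = σ.cycleClass y ↔ σ.SameCycle x y := by
  refine ⟨fun h => ?_, fun h => ?_⟩
  · have hy : y ∈ σ.cycleClass x := h ▸ mem_filter.2 ⟨mem_univ y, SameCycle.refl σ y⟩
    exact (mem_filter.1 hy).2
  · ext z
    simp only [cycleClass, mem_filter, mem_univ, true_and]
    exact ⟨h.symm.trans, h.trans⟩

theorem support_cycleOf_eq_cycleClass {σ : Perm α} {x : α} (hx : x ∈ σ.support) :
    (σ.cycleOf x).support = σ.cycleClass x := by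
  ext y
  rw [cycleClass, mem_filter, mem_support_cycleOf_iff]
  simp [hx]

def numCycles (σ : Perm α) : ℕ := #(univ.image σ.cycleClass)

theorem card_image_cycleClass_support (σ : Perm α) :
    #(σ.support.image σ.cycleClass) = #σ.cycleFactorsFinset := by
  symm
  refine card_bij (fun c _ => c.support) ?_ ?_ ?_
  · intro c hc
    obtain ⟨a, ha⟩ := (mem_cycleFactorsFinset_iff.1 hc).1.nonempty_support
    have haσ := mem_cycleFactorsFinset_support_le hc ha
    rw [cycle_is_cycleOf ha hc, support_cycleOf_eq_cycleClass haσ]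
    exact mem_image_of_mem _ haσ
  · intro c hc c' hc' h
    obtain ⟨a, ha⟩ := (mem_cycleFactorsFinset_iff.1 hc).1.nonempty_support
    rw [cycle_is_cycleOf ha hc, cycle_is_cycleOf (h ▸ ha) hc']
  · simp only [mem_image, exists_prop, forall_exists_index, and_imp]
    rintro _ x hx rfl
    exact ⟨σ.cycleOf x, cycleOf_mem_cycleFactorsFinset_iff.2 hx,
      support_cycleOf_eq_cycleClass hx⟩

theorem numCycles_eq_cycleCount (σ : Perm α) : σ.numCycles = cycleCount σ := by
  have hfix : #(σ.supportᶜ.image σ.cycleClass) = #σ.supportᶜ :=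
    card_image_of_injOn fun x hx _ _ h =>
      (cycleClass_eq_iff.1 h).eq_of_left (show σ x = x by simpa using hx)
  have hdisj :
      _root_.Disjoint (σ.support.image σ.cycleClass) (σ.supportᶜ.image σ.cycleClass) := by
    simp only [disjoint_left, mem_image, mem_compl, not_exists, not_and]
    rintro _ ⟨x, hx, rfl⟩ y hy hyx
    exact hy ((cycleClass_eq_iff.1 hyx).mem_support_iff.2 hx)
  rw [numCycles, cycleCount, ← union_compl σ.support, image_union, card_union_of_disjoint hdisj,
    card_image_cycleClass_support, hfix, card_compl, cycleType_def, Multiset.card_map, card_def]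

theorem numCycles_one : (1 : Perm α).numCycles = Fintype.card α := by
  simp [numCycles_eq_cycleCount, cycleCount]

theorem card_image_le_numCycles {β : Type*} [DecidableEq β] {σ : Perm α} {F : α → β}
    (hF : ∀ u, F (σ u) = F u) : #(univ.image F) ≤ σ.numCycles :=
  card_image_le_card_image_of_factors fun _ _ _ _ h =>
    (cycleClass_eq_iff.1 h).eq_of_invariant hF

theorem numCycles_le_numCycles_swap_mul_add_one (σ : Perm α) (a b : α) :
    σ.numCycles ≤ (swap a b * σ).numCycles + 1 := by
  -- `merge` glues the cycles of `a` and `b` together; this makes it constant along the cycles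
  -- of `swap a b * σ`, whether the swap merges two cycles of `σ` or splits one.
  let merge : Finset α → Finset α := fun t => if t = σ.cycleClass b then σ.cycleClass a else t
  have hmerge : ∀ z, merge (σ.cycleClass (swap a b z)) = merge (σ.cycleClass z) := by
    intro z
    rcases eq_or_ne z a with rfl | hza
    · simp [merge]
    rcases eq_or_ne z b with rfl | hzb
    · simp [merge]
    rw [swap_apply_of_ne_of_ne hza hzb]
  have hinv : ∀ u, merge (σ.cycleClass ((swap a b * σ) u)) = merge (σ.cycleClass u) := by
    intro u
    rw [mul_apply, hmerge, cycleClass_eq_iff.2 (SameCycle.refl σ u).apply_right]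
  have hcover : univ.image σ.cycleClass ⊆
      insert (σ.cycleClass b) (univ.image (merge ∘ σ.cycleClass)) := by
    simp only [subset_iff, mem_image, mem_univ, true_and, mem_insert, Function.comp_apply]
    rintro _ ⟨z, rfl⟩
    by_cases hz : σ.cycleClass z = σ.cycleClass b
    · exact Or.inl hz
    · exact Or.inr ⟨z, if_neg hz⟩
  calc σ.numCycles ≤ #(univ.image (merge ∘ σ.cycleClass)) + 1 :=
        (card_le_card hcover).trans (card_insert_le _ _)
    _ ≤ (swap a b * σ).numCycles + 1 := by
        gcongr
        exact card_image_le_numCycles hinv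

theorem numCycles_swap_mul_le_add_one (σ : Perm α) (a b : α) :
    (swap a b * σ).numCycles ≤ σ.numCycles + 1 := by
  simpa using numCycles_le_numCycles_swap_mul_add_one (swap a b * σ) a b

theorem numCycles_swap_mul_apply_self {σ : Perm α} {x : α} (hx : σ x ≠ x) :
    (swap x (σ x) * σ).numCycles = σ.numCycles + 1 := by
  have hle := numCycles_swap_mul_le_add_one σ x (σ x)
  set σ' := swap x (σ x) * σ
  have hx' : σ' x = x := by simp [σ']
  have hinv : ∀ u, σ.cycleClass (σ' u) = σ.cycleClass u := fun u =>
    cycleClass_eq_iff.2 (sameCycle_swap_mul_apply (SameCycle.refl σ x).apply_right u).symm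
  have hlt : σ.numCycles < σ'.numCycles :=
    card_image_lt_card_image_of_factors (x := x) (y := σ x)
      (fun _ _ _ _ h => (cycleClass_eq_iff.1 h).eq_of_invariant hinv) (mem_univ _) (mem_univ _)
      (fun h => hx ((cycleClass_eq_iff.1 h).eq_of_left hx').symm)
      (cycleClass_eq_iff.2 (SameCycle.refl σ x).apply_right)
  omega

theorem card_le_length_add_numCycles_prod (l : List (Perm α)) (hl : ∀ τ ∈ l, τ.IsSwap) :
    Fintype.card α ≤ l.length + l.prod.numCycles := by
  induction l with
  | nil => simp [numCycles_one]
  | cons τ l ih =>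
    rw [List.forall_mem_cons] at hl
    obtain ⟨⟨a, b, -, rfl⟩, hl⟩ := hl
    have hswap := numCycles_le_numCycles_swap_mul_add_one l.prod a b
    rw [List.length_cons, List.prod_cons]
    have := ih hl
    omega

theorem exists_swap_list_length_add_numCycles (σ : Perm α) :
    ∃ l : List (Perm α), (∀ τ ∈ l, τ.IsSwap) ∧ l.prod = σ ∧
      l.length + σ.numCycles = Fintype.card α := by
  induction hn : #σ.support using Nat.strong_induction_on generalizing σ with
  | _ n ih =>
    by_cases hσ : σ = 1
    · subst hσ
      exact ⟨[], by simp, rfl, by simp [numCycles_one]⟩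
    obtain ⟨x, hx⟩ : ∃ x, σ x ≠ x := by simpa [Equiv.ext_iff] using hσ
    obtain ⟨l, hl, hprod, hlen⟩ := ih _ (hn ▸ card_support_swap_mul hx) _ rfl
    refine ⟨swap x (σ x) :: l, List.forall_mem_cons.2 ⟨⟨x, σ x, Ne.symm hx, rfl⟩, hl⟩, ?_, ?_⟩
    · rw [List.prod_cons, hprod, swap_mul_self_mul]
    · rw [List.length_cons, ← hlen, numCycles_swap_mul_apply_self hx]
      ring

end Equiv.Perm

open Equiv.Perm

theorem reflLen_add_cycleCount {α : Type*} [DecidableEq α] [Fintype α] (σ : Perm α) :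
    reflLen σ + cycleCount σ = Fintype.card α := by
  rw [← numCycles_eq_cycleCount]
  obtain ⟨l, hl, hprod, hlen⟩ := exists_swap_list_length_add_numCycles σ
  have hmem : l.length ∈ {m | ∃ l : List (Perm α), l.length = m ∧ (∀ τ ∈ l, τ.IsSwap) ∧
      l.prod = σ} := ⟨l, rfl, hl, hprod⟩
  obtain ⟨l', hlen', hl', rfl⟩ := Nat.sInf_mem ⟨_, hmem⟩
  have hlower := card_le_length_add_numCycles_prod l' hl'
  have hupper : reflLen l'.prod ≤ l.length := Nat.sInf_le hmem
  rw [reflLen] at hupper ⊢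
  omega

theorem cycleCount_annGamma {k l : ℕ} (hk : 0 < k) (hl : 0 < l) :
    cycleCount (annGamma k l) = 2 := by
  have hcover : univ.image (annGamma k l).cycleClass =
      {(annGamma k l).cycleClass (.inl ⟨0, hk⟩), (annGamma k l).cycleClass (.inr ⟨0, hl⟩)} := by
    ext t
    simp only [mem_image, mem_univ, true_and, mem_insert, mem_singleton]
    constructor
    · rintro ⟨x | y, rfl⟩
      · exact Or.inl (cycleClass_eq_iff.2 (sameCycle_sumCongr_inl.2 (sameCycle_finRotate _ _)))
      · exact Or.inr (cycleClass_eq_iff.2 (sameCycle_sumCongr_inr.2 (sameCycle_finRotate _ _)))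
    · rintro (rfl | rfl) <;> exact ⟨_, rfl⟩
  rw [← numCycles_eq_cycleCount, numCycles, hcover]
  exact card_pair fun h =>
    not_sameCycle_sumCongr_inl_inr (finRotate k) (finRotate l) _ _ (cycleClass_eq_iff.1 h)

/-- For any annular non-crossing permutation `π` of the `(k,ℓ)`-annulus, the number of cycles
of `π` plus the number of cycles of its annular Kreweras complement `K(π) = π⁻¹γ` equals
`k + ℓ`. -/
theorem annular_kreweras_cycle_count (k l : ℕ) (hk : 0 < k) (hl : 0 < l)
    (π : Equiv.Perm (Fin k ⊕ Fin l)) (hπ : IsAnnularNC k l π) :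
    cycleCount π + cycleCount (π⁻¹ * annGamma k l) = k + l := by
  have hrefl := hπ.2
  have hπ' := reflLen_add_cycleCount π
  have hK := reflLen_add_cycleCount (π⁻¹ * annGamma k l)
  have hγ := reflLen_add_cycleCount (annGamma k l)
  rw [cycleCount_annGamma hk hl] at hγ
  simp only [Fintype.card_sum, Fintype.card_fin] at hπ' hK hγ
  omega
end
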